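/- arXiv:2409.03980 — 2 statements merged into one kernel-verified Lean document; each statement's English description precedes it below -/
import Mathlib

section
/- Suppose M* ∈ ℝ^{n×m} is additive and the observations are M_{kℓ} = M*_{kℓ} + E_{kℓ} for (k,ℓ) ∈ Ω, where the E_{kℓ} are independent, mean-zero, square-integrable random variables with Var[E_{kℓ}] ≤ σ². Then for every (i,j) such that u_i and v_j lie in the same connected component of G(Ω), the electrical flow estimator satisfies Var[M̂^EFE_{ij}] ≤ σ² R(u_i,v_j); moreover, if Var[E_{kℓ}] = σ² for every (k,ℓ) ∈ Ω, then Var[M̂^EFE_{ij}] = σ² R(u_i,v_j). -/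
/-!
The estimator is a constant plus `∑ (v_k − v_{n+ℓ}) E_{kℓ}`, so by independence its variance is
`∑ (v_k − v_{n+ℓ})² Var[E_{kℓ}] ≤ σ² ∑ (v_k − v_{n+ℓ})²`. Since `L = ∑_{(k,ℓ) ∈ Ω} b b^T` with
`b = e_k − e_{n+ℓ}`, the last sum is the energy `vᵀ L v = (e_i − e_{n+j})ᵀ v = R(u_i, v_j)`.
-/

open Finset MeasureTheory ProbabilityTheory

/-- The bipartite observation graph `G(Ω)`: row vertices `Sum.inl k` and column
vertices `Sum.inr ℓ`, with an edge iff `(k,ℓ) ∈ Ω`. -/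
def bipGraph {n m : ℕ} (Ω : Finset (Fin n × Fin m)) : SimpleGraph (Fin n ⊕ Fin m) where
  Adj x y :=
    match x, y with
    | Sum.inl k, Sum.inr l => (k, l) ∈ Ω
    | Sum.inr l, Sum.inl k => (k, l) ∈ Ω
    | _, _ => False
  symm := ⟨by
    rintro (k | k) (l | l) h
    · exact h.elim
    · exact h
    · exact h
    · exact h.elim⟩
  loopless := ⟨by rintro (k | k) h <;> exact h⟩

/-- The graph Laplacian `L = D − A` of `G(Ω)`, with vertices ordered rows then columns. -/
noncomputable def lap {n m : ℕ} (Ω : Finset (Fin n × Fin m)) :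
    Matrix (Fin n ⊕ Fin m) (Fin n ⊕ Fin m) ℝ :=
  fun x y =>
    (if x = y then
      (match x with
       | Sum.inl k => ((Ω.filter fun p => p.1 = k).card : ℝ)
       | Sum.inr l => ((Ω.filter fun p => p.2 = l).card : ℝ))
     else 0)
    -
    (match x, y with
     | Sum.inl k, Sum.inr l => if (k, l) ∈ Ω then (1 : ℝ) else 0
     | Sum.inr l, Sum.inl k => if (k, l) ∈ Ω then (1 : ℝ) else 0
     | _, _ => 0)

/-- The vector `e_i − e_{n+j}` of `ℝ^{n+m}`. -/
def stdVec {n m : ℕ} (i : Fin n) (j : Fin m) : (Fin n ⊕ Fin m) → ℝ :=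
  fun x => (if x = Sum.inl i then 1 else 0) - (if x = Sum.inr j then 1 else 0)

/-- `v` is a voltage vector for the pair `(i,j)`: `L v = e_i − e_{n+j}`.
The effective resistance `R(u_i, v_j)` is `(e_i − e_{n+j})ᵀ v = v_i − v_{n+j}`
for any voltage vector `v`. -/
noncomputable def IsVoltage {n m : ℕ} (Ω : Finset (Fin n × Fin m)) (i : Fin n) (j : Fin m)
    (v : (Fin n ⊕ Fin m) → ℝ) : Prop :=
  (lap Ω).mulVec v = stdVec i j

open Matrix

lemma Finset.card_filter_eq_and_eq {α β : Type*} [DecidableEq β] (s : Finset α) (f : α → β)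
    (b b' : β) : #{a ∈ s | f a = b ∧ f a = b'} = if b = b' then #{a ∈ s | f a = b} else 0 := by
  split_ifs with h
  · simp [h]
  · simp only [card_eq_zero, filter_eq_empty_iff]
    grind

lemma Finset.card_filter_fst_eq_and_snd_eq {α β : Type*} [DecidableEq α] [DecidableEq β]
    (s : Finset (α × β)) (a : α) (b : β) :
    #{p ∈ s | p.1 = a ∧ p.2 = b} = if (a, b) ∈ s then 1 else 0 := by
  have : (fun p : α × β => p.1 = a ∧ p.2 = b) = (· = (a, b)) := by ext p; simp [Prod.ext_iff]
  simp [this, filter_eq', apply_ite]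

lemma stdVec_inl {n m : ℕ} (i : Fin n) (j : Fin m) (k : Fin n) :
    stdVec i j (Sum.inl k) = if i = k then 1 else 0 := by
  simp [stdVec, eq_comm]

lemma stdVec_inr {n m : ℕ} (i : Fin n) (j : Fin m) (l : Fin m) :
    stdVec i j (Sum.inr l) = -if j = l then 1 else 0 := by
  simp [stdVec, eq_comm]

lemma stdVec_dotProduct {n m : ℕ} (i : Fin n) (j : Fin m) (v : Fin n ⊕ Fin m → ℝ) :
    stdVec i j ⬝ᵥ v = v (Sum.inl i) - v (Sum.inr j) := by
  simp [stdVec, dotProduct, sub_mul, sum_sub_distrib]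

lemma lap_eq_sum_vecMulVec {n m : ℕ} (Ω : Finset (Fin n × Fin m)) :
    lap Ω = ∑ p ∈ Ω, vecMulVec (stdVec p.1 p.2) (stdVec p.1 p.2) := by
  -- Lean cannot generate equation lemmas for the nested `match` in `lap`, hence `delta`.
  ext (k | l) (k' | l') <;> delta lap <;>
    simp only [Sum.inl.injEq, Sum.inr.injEq, reduceCtorEq, if_false, sub_zero, zero_sub, neg_neg,
      Matrix.sum_apply, vecMulVec_apply, stdVec_inl, stdVec_inr, mul_neg, neg_mul,
      ite_zero_mul_ite_zero, mul_one, sum_neg_distrib, sum_boole, card_filter_eq_and_eq,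
      card_filter_fst_eq_and_snd_eq, Nat.cast_ite, Nat.cast_one, Nat.cast_zero]
  simp only [and_comm, card_filter_fst_eq_and_snd_eq, Nat.cast_ite, Nat.cast_one, Nat.cast_zero]

lemma dotProduct_lap_mulVec {n m : ℕ} (Ω : Finset (Fin n × Fin m)) (v : Fin n ⊕ Fin m → ℝ) :
    v ⬝ᵥ (lap Ω *ᵥ v) = ∑ p ∈ Ω, (v (Sum.inl p.1) - v (Sum.inr p.2)) ^ 2 := by
  rw [dotProduct_comm, lap_eq_sum_vecMulVec, Matrix.sum_mulVec, sum_dotProduct]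
  simp only [vecMulVec_mulVec, op_smul_eq_smul, smul_dotProduct, stdVec_dotProduct, smul_eq_mul, sq]

lemma IsVoltage.sum_sq_eq {n m : ℕ} {Ω : Finset (Fin n × Fin m)} {i : Fin n} {j : Fin m}
    {v : Fin n ⊕ Fin m → ℝ} (hv : IsVoltage Ω i j v) :
    ∑ p ∈ Ω, (v (Sum.inl p.1) - v (Sum.inr p.2)) ^ 2 = v (Sum.inl i) - v (Sum.inr j) := by
  rw [← dotProduct_lap_mulVec, hv, dotProduct_comm, stdVec_dotProduct]

lemma variance_const_add_sum_mul {Ω ι : Type*} [MeasurableSpace Ω] {μ : Measure Ω}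
    [IsProbabilityMeasure μ] {s : Finset ι} {X : ι → Ω → ℝ} (hX : ∀ i ∈ s, MemLp (X i) 2 μ)
    (hindep : Set.Pairwise ↑s fun i j => IndepFun (X i) (X j) μ) (c₀ : ℝ) (c : ι → ℝ) :
    variance (fun ω => c₀ + ∑ i ∈ s, c i * X i ω) μ = ∑ i ∈ s, c i ^ 2 * variance (X i) μ := by
  have hcX : ∀ i ∈ s, MemLp (fun ω => c i * X i ω) 2 μ := fun i hi => (hX i hi).const_mul (c i)
  rw [variance_const_add (memLp_finsetSum s hcX).aestronglyMeasurable, ← sum_fn,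
    IndepFun.variance_sum hcX fun i hi j hj hij => (hindep hi hj hij).comp
      (measurable_const_mul (c i)) (measurable_const_mul (c j))]
  exact sum_congr rfl fun i _ => variance_const_mul (c i) (X i) μ

theorem stmt4_general {n m : ℕ} (Ω : Finset (Fin n × Fin m))
    (a : Fin n → ℝ) (b : Fin m → ℝ) (σ : ℝ)
    {ΩP : Type*} [MeasurableSpace ΩP] (μ : Measure ΩP) [IsProbabilityMeasure μ]
    (E : Fin n × Fin m → ΩP → ℝ)
    (hindep : iIndepFun (fun p : {q // q ∈ Ω} => E p.1) μ)
    (hL2 : ∀ p ∈ Ω, MemLp (E p) 2 μ)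
    (hvar : ∀ p ∈ Ω, variance (E p) μ ≤ σ ^ 2)
    (i : Fin n) (j : Fin m)
    (v : (Fin n ⊕ Fin m) → ℝ) (hv : IsVoltage Ω i j v) :
    variance
        (fun ω => ∑ p ∈ Ω, (v (Sum.inl p.1) - v (Sum.inr p.2)) * (a p.1 + b p.2 + E p ω)) μ
      ≤ σ ^ 2 * (v (Sum.inl i) - v (Sum.inr j)) ∧
    ((∀ p ∈ Ω, variance (E p) μ = σ ^ 2) →
      variance
          (fun ω => ∑ p ∈ Ω, (v (Sum.inl p.1) - v (Sum.inr p.2)) * (a p.1 + b p.2 + E p ω)) μ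
        = σ ^ 2 * (v (Sum.inl i) - v (Sum.inr j))) := by
  have hpair : Set.Pairwise ↑Ω fun p q => IndepFun (E p) (E q) μ := fun p hp q hq hpq =>
    hindep.indepFun (i := ⟨p, hp⟩) (j := ⟨q, hq⟩) (by simpa using hpq)
  have hest : variance
        (fun ω => ∑ p ∈ Ω, (v (Sum.inl p.1) - v (Sum.inr p.2)) * (a p.1 + b p.2 + E p ω)) μ
      = ∑ p ∈ Ω, (v (Sum.inl p.1) - v (Sum.inr p.2)) ^ 2 * variance (E p) μ := by
    rw [← variance_const_add_sum_mul hL2 hpair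
      (∑ p ∈ Ω, (v (Sum.inl p.1) - v (Sum.inr p.2)) * (a p.1 + b p.2))]
    simp only [← sum_add_distrib, mul_add]
  rw [hest, ← hv.sum_sq_eq, mul_sum]
  refine ⟨sum_le_sum fun p hp => ?_, fun hall => sum_congr rfl fun p hp => ?_⟩
  · rw [mul_comm (σ ^ 2)]
    exact mul_le_mul_of_nonneg_left (hvar p hp) (sq_nonneg _)
  · rw [hall p hp, mul_comm]

theorem stmt4 {n m : ℕ} (Ω : Finset (Fin n × Fin m))
    (a : Fin n → ℝ) (b : Fin m → ℝ) (σ : ℝ)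
    {ΩP : Type*} [MeasurableSpace ΩP] (μ : Measure ΩP) [IsProbabilityMeasure μ]
    (E : Fin n × Fin m → ΩP → ℝ)
    (hmeas : ∀ p ∈ Ω, Measurable (E p))
    (hindep : iIndepFun (fun p : {q // q ∈ Ω} => E p.1) μ)
    (hL2 : ∀ p ∈ Ω, MemLp (E p) 2 μ)
    (hmean : ∀ p ∈ Ω, ∫ ω, E p ω ∂μ = 0)
    (hvar : ∀ p ∈ Ω, variance (E p) μ ≤ σ ^ 2)
    (i : Fin n) (j : Fin m)
    (hconn : (bipGraph Ω).Reachable (Sum.inl i) (Sum.inr j))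
    (v : (Fin n ⊕ Fin m) → ℝ) (hv : IsVoltage Ω i j v) :
    variance
        (fun ω => ∑ p ∈ Ω, (v (Sum.inl p.1) - v (Sum.inr p.2)) * (a p.1 + b p.2 + E p ω)) μ
      ≤ σ ^ 2 * (v (Sum.inl i) - v (Sum.inr j)) ∧
    ((∀ p ∈ Ω, variance (E p) μ = σ ^ 2) →
      variance
          (fun ω => ∑ p ∈ Ω, (v (Sum.inl p.1) - v (Sum.inr p.2)) * (a p.1 + b p.2 + E p ω)) μ
        = σ ^ 2 * (v (Sum.inl i) - v (Sum.inr j))) :=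
  stmt4_general Ω a b σ μ E hindep hL2 hvar i j v hv
end

section
/- Fix observed values M_{kℓ} ∈ ℝ for (k,ℓ) ∈ Ω, and let (i,j) ∈ [n]×[m] be such that u_i and v_j lie in the same connected component of G(Ω). If (a,b) and (a',b') both minimize f(a,b) = ∑_{(k,ℓ)∈Ω} (a_k + b_ℓ − M_{kℓ})², then a_i + b_j = a'_i + b'_j. -/
/-!
STATEMENT 18: If `u_i` and `v_j` lie in the same connected component of `G(Ω)`,
then all least squares minimizers of the additive objective give the same fitted
value at entry `(i,j)`.
-/

open Finset

/-- The least squares objective `f(a,b) = ∑_{(k,ℓ)∈Ω} (a_k + b_ℓ − M_{kℓ})²`. -/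
def lseObj {n m : ℕ} (Ω : Finset (Fin n × Fin m)) (M : Fin n × Fin m → ℝ)
    (a : Fin n → ℝ) (b : Fin m → ℝ) : ℝ :=
  ∑ p ∈ Ω, (a p.1 + b p.2 - M p) ^ 2

/-!
Averaging two minimizers lowers `f` below their common minimum value by
`∑_{(k,ℓ)∈Ω} ((a_k + b_ℓ − a'_k − b'_ℓ)/2)²`, so minimizers fit the same values on `Ω`.
Then `a − a'` on rows and `b' − b` on columns is a potential on the vertices of `G(Ω)`
that agrees across every edge, hence is constant on connected components; equality of
its values at `u_i` and `v_j` is the claim.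
-/

theorem sum_sq_midpoint {ι : Type*} (s : Finset ι) (r r' : ι → ℝ) :
    ∑ p ∈ s, ((r p + r' p) / 2) ^ 2
      = (∑ p ∈ s, r p ^ 2 + ∑ p ∈ s, r' p ^ 2) / 2 - ∑ p ∈ s, ((r p - r' p) / 2) ^ 2 := by
  rw [← sum_add_distrib, sum_div, ← sum_sub_distrib]
  exact sum_congr rfl fun p _ => by ring

theorem SimpleGraph.Reachable.apply_eq_of_forall_adj {V β : Type*} {G : SimpleGraph V}
    {f : V → β} (hf : ∀ x y, G.Adj x y → f x = f y) {u v : V} (h : G.Reachable u v) :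
    f u = f v := by
  obtain ⟨w⟩ := h
  induction w with
  | nil => rfl
  | cons hadj _ ih => exact (hf _ _ hadj).trans ih

section LeastSquares

variable {n m : ℕ} {Ω : Finset (Fin n × Fin m)} {M : Fin n × Fin m → ℝ}
  {a a' : Fin n → ℝ} {b b' : Fin m → ℝ}

theorem lseObj_midpoint :
    lseObj Ω M (fun k => (a k + a' k) / 2) (fun l => (b l + b' l) / 2)
      = (lseObj Ω M a b + lseObj Ω M a' b') / 2
        - ∑ p ∈ Ω, ((a p.1 + b p.2 - (a' p.1 + b' p.2)) / 2) ^ 2 := by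
  unfold lseObj
  convert sum_sq_midpoint Ω (fun p => a p.1 + b p.2 - M p) (fun p => a' p.1 + b' p.2 - M p)
    using 3 with p <;> ring

theorem fit_eq_of_forall_lseObj_le
    (hmin : ∀ x y, lseObj Ω M a b ≤ lseObj Ω M x y) (hle : lseObj Ω M a' b' ≤ lseObj Ω M a b) :
    ∀ p ∈ Ω, a p.1 + b p.2 = a' p.1 + b' p.2 := by
  have hdrop : ∑ p ∈ Ω, ((a p.1 + b p.2 - (a' p.1 + b' p.2)) / 2) ^ 2 ≤ 0 := by
    have hmid := hmin (fun k => (a k + a' k) / 2) (fun l => (b l + b' l) / 2)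
    rw [lseObj_midpoint] at hmid
    linarith
  intro p hp
  have hsq := (sum_eq_zero_iff_of_nonneg fun p _ => sq_nonneg _).mp
    (hdrop.antisymm (sum_nonneg fun p _ => sq_nonneg _)) p hp
  linarith [pow_eq_zero_iff two_ne_zero |>.mp hsq]

theorem fit_eq_of_reachable (hfit : ∀ p ∈ Ω, a p.1 + b p.2 = a' p.1 + b' p.2)
    {i : Fin n} {j : Fin m} (h : (bipGraph Ω).Reachable (Sum.inl i) (Sum.inr j)) :
    a i + b j = a' i + b' j := by
  have hadj : ∀ x y, (bipGraph Ω).Adj x y →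
      Sum.elim (a - a') (b' - b) x = Sum.elim (a - a') (b' - b) y := by
    rintro (k | l) (k' | l') hxy
    · exact hxy.elim
    · simp only [Sum.elim_inl, Sum.elim_inr, Pi.sub_apply]
      linarith [hfit (k, l') hxy]
    · simp only [Sum.elim_inl, Sum.elim_inr, Pi.sub_apply]
      linarith [hfit (k', l) hxy]
    · exact hxy.elim
  have hij := h.apply_eq_of_forall_adj hadj
  simp only [Sum.elim_inl, Sum.elim_inr, Pi.sub_apply] at hij
  linarith

end LeastSquares

theorem stmt18 {n m : ℕ} (Ω : Finset (Fin n × Fin m)) (M : Fin n × Fin m → ℝ)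
    (i : Fin n) (j : Fin m)
    (hconn : (bipGraph Ω).Reachable (Sum.inl i) (Sum.inr j))
    (a : Fin n → ℝ) (b : Fin m → ℝ) (a' : Fin n → ℝ) (b' : Fin m → ℝ)
    (h1 : ∀ (x : Fin n → ℝ) (y : Fin m → ℝ), lseObj Ω M a b ≤ lseObj Ω M x y)
    (h2 : ∀ (x : Fin n → ℝ) (y : Fin m → ℝ), lseObj Ω M a' b' ≤ lseObj Ω M x y) :
    a i + b j = a' i + b' j :=
  fit_eq_of_reachable (fit_eq_of_forall_lseObj_le h1 (h2 a b)) hconn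
end
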